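/- Nonstationary exact solution with α = 0: Let d₁, d₂ be real, d₃ ≠ 0, C₂ a real constant, and F : ℝ → ℝ any differentiable function. Then the functions u(t,x,y) = 4d₂/(x²+y²), v(t,x,y) = 4d₁/(x²+y²), w(t,x,y) = (C₂/t)·exp(−(x²+y²)/(4d₃t)) − 4d₁d₂/(d₃(x²+y²)) satisfy the system u_t + 2F′(x²+y²)(x u_y − y u_x) = d₁(u_xx + u_yy) − uv, v_t + 2F′(x²+y²)(x v_y − y v_x) = d₂(v_xx + v_yy) − uv, w_t + 2F′(x²+y²)(x w_y − y w_x) = d₃(w_xx + w_yy) + uv, at every point (t,x,y) with t > 0 and (x,y) ≠ (0,0). -/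

import Mathlib

/-!
The functions `u`, `v`, `w` depend on `(x, y)` only through `ρ = x² + y²`, so the convective
term `2 F'(ρ) (x ∂ᵧ - y ∂ₓ)` annihilates them, and the system collapses to a reaction–diffusion
system in `(t, ρ)`, in which `∂ₓ² + ∂ᵧ²` becomes `4 (∂ρ + ρ ∂ρ²)`. There `c/ρ` is stationary with
Laplacian `4c/ρ²`, which balances `uv = 16 d₁d₂/ρ²` in the first two equations, and
`C/t · exp(-ρ/(4 d₃ t))` is the heat kernel, so the correction `-4 d₁d₂/(d₃ ρ)` in `w` contributes
exactly the reaction term `+uv`.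
-/

/-- Partial derivative with respect to `t` of a function of `(t,x,y)`. -/
noncomputable def pdT (f : ℝ × ℝ × ℝ → ℝ) (p : ℝ × ℝ × ℝ) : ℝ := fderiv ℝ f p (1, 0, 0)
/-- Partial derivative with respect to `x`. -/
noncomputable def pdX (f : ℝ × ℝ × ℝ → ℝ) (p : ℝ × ℝ × ℝ) : ℝ := fderiv ℝ f p (0, 1, 0)
/-- Partial derivative with respect to `y`. -/
noncomputable def pdY (f : ℝ × ℝ × ℝ → ℝ) (p : ℝ × ℝ × ℝ) : ℝ := fderiv ℝ f p (0, 0, 1)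

/-- `(u,v,w)` solves the convective Lotka–Volterra system (`k = 1`) with radially
symmetric stream function `Ψ = F(x²+y²)`; here `F'` denotes the derivative of `F`. -/
def SolvesRadial (d₁ d₂ d₃ : ℝ) (F' : ℝ → ℝ) (u v w : ℝ × ℝ × ℝ → ℝ)
    (Ω : Set (ℝ × ℝ × ℝ)) : Prop :=
  ∀ p ∈ Ω,
    (pdT u p + 2 * F' (p.2.1 ^ 2 + p.2.2 ^ 2) * (p.2.1 * pdY u p - p.2.2 * pdX u p)
      = d₁ * (pdX (pdX u) p + pdY (pdY u) p) - u p * v p) ∧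
    (pdT v p + 2 * F' (p.2.1 ^ 2 + p.2.2 ^ 2) * (p.2.1 * pdY v p - p.2.2 * pdX v p)
      = d₂ * (pdX (pdX v) p + pdY (pdY v) p) - u p * v p) ∧
    (pdT w p + 2 * F' (p.2.1 ^ 2 + p.2.2 ^ 2) * (p.2.1 * pdY w p - p.2.2 * pdX w p)
      = d₃ * (pdX (pdX w) p + pdY (pdY w) p) + u p * v p)

open Real Filter Topology Set

def timeRadiusSq (p : ℝ × ℝ × ℝ) : ℝ × ℝ := (p.1, p.2.1 ^ 2 + p.2.2 ^ 2)

noncomputable def pd₁ (G : ℝ × ℝ → ℝ) (q : ℝ × ℝ) : ℝ := fderiv ℝ G q (1, 0)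

noncomputable def pd₂ (G : ℝ × ℝ → ℝ) (q : ℝ × ℝ) : ℝ := fderiv ℝ G q (0, 1)

/-- The Laplacian `∂ₓ² + ∂ᵧ²` of `(t, x, y) ↦ G (t, x² + y²)`, written in the variables
`(t, ρ)` with `ρ = x² + y²`. -/
noncomputable def radialLaplacian (G : ℝ × ℝ → ℝ) (q : ℝ × ℝ) : ℝ :=
  4 * (pd₂ G q + q.2 * pd₂ (pd₂ G) q)

lemma differentiable_timeRadiusSq : Differentiable ℝ timeRadiusSq := by
  unfold timeRadiusSq
  fun_prop

lemma fderiv_timeRadiusSq_apply (p v : ℝ × ℝ × ℝ) :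
    fderiv ℝ timeRadiusSq p v = (v.1, 2 * (p.2.1 * v.2.1 + p.2.2 * v.2.2)) := by
  unfold timeRadiusSq
  rw [DifferentiableAt.fderiv_prodMk (by fun_prop) (by fun_prop)]
  simp (disch := fun_prop) [fderiv_fun_add, fderiv_fun_pow, fderiv.fst, fderiv.snd]
  ring

section PartialDerivatives

variable {G H : ℝ × ℝ → ℝ} {q : ℝ × ℝ} {S : Set (ℝ × ℝ)}

lemma fderiv_apply_eq_pd (G : ℝ × ℝ → ℝ) (q v : ℝ × ℝ) :
    fderiv ℝ G q v = v.1 * pd₁ G q + v.2 * pd₂ G q := by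
  have hv : v = v.1 • ((1 : ℝ), (0 : ℝ)) + v.2 • ((0 : ℝ), (1 : ℝ)) := by ext <;> simp
  rw [hv, map_add, map_smul, map_smul]
  simp [pd₁, pd₂]

lemma pd₁_eq_of_hasDerivAt {a : ℝ} (hG : DifferentiableAt ℝ G q)
    (h : HasDerivAt (fun s => G (s, q.2)) a q.1) : pd₁ G q = a :=
  (hG.hasFDerivAt.comp_hasDerivAt q.1
    ((hasDerivAt_id q.1).prodMk (hasDerivAt_const q.1 q.2))).unique h

lemma pd₂_eq_of_hasDerivAt {a : ℝ} (hG : DifferentiableAt ℝ G q)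
    (h : HasDerivAt (fun s => G (q.1, s)) a q.2) : pd₂ G q = a :=
  (hG.hasFDerivAt.comp_hasDerivAt q.2
    ((hasDerivAt_const q.2 q.1).prodMk (hasDerivAt_id q.2))).unique h

lemma pd₁_sub (hG : DifferentiableAt ℝ G q) (hH : DifferentiableAt ℝ H q) :
    pd₁ (fun r => G r - H r) q = pd₁ G q - pd₁ H q := by
  simp [pd₁, fderiv_fun_sub hG hH]

lemma pd₂_sub (hG : DifferentiableAt ℝ G q) (hH : DifferentiableAt ℝ H q) :
    pd₂ (fun r => G r - H r) q = pd₂ G q - pd₂ H q := by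
  simp [pd₂, fderiv_fun_sub hG hH]

lemma ContDiffOn.differentiableOn_pd₂ (hG : ContDiffOn ℝ 2 G S) (hS : IsOpen S) :
    DifferentiableOn ℝ (pd₂ G) S :=
  ((hG.fderiv_of_isOpen hS (m := 1) (by norm_num)).clm_apply contDiffOn_const).differentiableOn
    one_ne_zero

lemma radialLaplacian_eq_of_hasDerivAt {g : ℝ × ℝ → ℝ} {a : ℝ} (hS : IsOpen S) (hq : q ∈ S)
    (hG : DifferentiableOn ℝ G S) (hGg : ∀ r ∈ S, HasDerivAt (fun s => G (r.1, s)) (g r) r.2)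
    (hg : DifferentiableAt ℝ g q) (hga : HasDerivAt (fun s => g (q.1, s)) a q.2) :
    radialLaplacian G q = 4 * (g q + q.2 * a) := by
  have hpd : pd₂ G =ᶠ[𝓝 q] g := eventually_of_mem (hS.mem_nhds hq) fun r hr =>
    pd₂_eq_of_hasDerivAt (hG.differentiableAt (hS.mem_nhds hr)) (hGg r hr)
  have hpd₂ : pd₂ (pd₂ G) q = a := by
    rw [pd₂, hpd.fderiv_eq]
    exact pd₂_eq_of_hasDerivAt hg hga
  rw [radialLaplacian, hpd.eq_of_nhds, hpd₂]

lemma radialLaplacian_sub (hS : IsOpen S) (hq : q ∈ S) (hG : ContDiffOn ℝ 2 G S)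
    (hH : ContDiffOn ℝ 2 H S) :
    radialLaplacian (fun r => G r - H r) q = radialLaplacian G q - radialLaplacian H q := by
  have hdiff {K : ℝ × ℝ → ℝ} (hK : ContDiffOn ℝ 2 K S) {r : ℝ × ℝ} (hr : r ∈ S) :
      DifferentiableAt ℝ K r :=
    (hK.differentiableOn two_ne_zero).differentiableAt (hS.mem_nhds hr)
  have hpd : pd₂ (fun r => G r - H r) =ᶠ[𝓝 q] fun r => pd₂ G r - pd₂ H r :=
    eventually_of_mem (hS.mem_nhds hq) fun r hr => pd₂_sub (hdiff hG hr) (hdiff hH hr)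
  have hpd₂ : pd₂ (pd₂ fun r => G r - H r) q = pd₂ (pd₂ G) q - pd₂ (pd₂ H) q := by
    rw [pd₂, hpd.fderiv_eq, ← pd₂]
    exact pd₂_sub ((hG.differentiableOn_pd₂ hS).differentiableAt (hS.mem_nhds hq))
      ((hH.differentiableOn_pd₂ hS).differentiableAt (hS.mem_nhds hq))
  rw [radialLaplacian, radialLaplacian, radialLaplacian, hpd₂, hpd.eq_of_nhds]
  ring

end PartialDerivatives

section RadialLift

variable {G : ℝ × ℝ → ℝ} {p : ℝ × ℝ × ℝ}

lemma fderiv_comp_timeRadiusSq_apply (hG : DifferentiableAt ℝ G (timeRadiusSq p))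
    (v : ℝ × ℝ × ℝ) :
    fderiv ℝ (G ∘ timeRadiusSq) p v
      = v.1 * pd₁ G (timeRadiusSq p)
        + 2 * (p.2.1 * v.2.1 + p.2.2 * v.2.2) * pd₂ G (timeRadiusSq p) := by
  rw [fderiv_comp p hG differentiable_timeRadiusSq.differentiableAt,
    ContinuousLinearMap.comp_apply, fderiv_timeRadiusSq_apply, fderiv_apply_eq_pd]

lemma pdT_comp_timeRadiusSq (hG : DifferentiableAt ℝ G (timeRadiusSq p)) :
    pdT (G ∘ timeRadiusSq) p = pd₁ G (timeRadiusSq p) := by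
  simp [pdT, fderiv_comp_timeRadiusSq_apply hG]

lemma pdX_comp_timeRadiusSq (hG : DifferentiableAt ℝ G (timeRadiusSq p)) :
    pdX (G ∘ timeRadiusSq) p = 2 * p.2.1 * pd₂ G (timeRadiusSq p) := by
  simp [pdX, fderiv_comp_timeRadiusSq_apply hG]

lemma pdY_comp_timeRadiusSq (hG : DifferentiableAt ℝ G (timeRadiusSq p)) :
    pdY (G ∘ timeRadiusSq) p = 2 * p.2.2 * pd₂ G (timeRadiusSq p) := by
  simp [pdY, fderiv_comp_timeRadiusSq_apply hG]

lemma convection_comp_timeRadiusSq_eq_zero (hG : DifferentiableAt ℝ G (timeRadiusSq p)) :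
    p.2.1 * pdY (G ∘ timeRadiusSq) p - p.2.2 * pdX (G ∘ timeRadiusSq) p = 0 := by
  rw [pdX_comp_timeRadiusSq hG, pdY_comp_timeRadiusSq hG]
  ring

lemma pdX_pdX_comp_timeRadiusSq (hG : ∀ᶠ q in 𝓝 (timeRadiusSq p), DifferentiableAt ℝ G q)
    (hG₂ : DifferentiableAt ℝ (pd₂ G) (timeRadiusSq p)) :
    pdX (pdX (G ∘ timeRadiusSq)) p
      = 2 * pd₂ G (timeRadiusSq p) + 4 * p.2.1 ^ 2 * pd₂ (pd₂ G) (timeRadiusSq p) := by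
  have hpdX : pdX (G ∘ timeRadiusSq) =ᶠ[𝓝 p] fun r => 2 * r.2.1 * (pd₂ G ∘ timeRadiusSq) r :=
    (differentiable_timeRadiusSq.continuous.continuousAt.eventually hG).mono
      fun r hr => pdX_comp_timeRadiusSq hr
  rw [pdX, hpdX.fderiv_eq,
    fderiv_fun_mul (by fun_prop) (hG₂.comp p (differentiable_timeRadiusSq p))]
  simp (disch := fun_prop) [fderiv_comp_timeRadiusSq_apply hG₂, fderiv_const_mul, fderiv.fst,
    fderiv.snd]
  ring

lemma pdY_pdY_comp_timeRadiusSq (hG : ∀ᶠ q in 𝓝 (timeRadiusSq p), DifferentiableAt ℝ G q)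
    (hG₂ : DifferentiableAt ℝ (pd₂ G) (timeRadiusSq p)) :
    pdY (pdY (G ∘ timeRadiusSq)) p
      = 2 * pd₂ G (timeRadiusSq p) + 4 * p.2.2 ^ 2 * pd₂ (pd₂ G) (timeRadiusSq p) := by
  have hpdY : pdY (G ∘ timeRadiusSq) =ᶠ[𝓝 p] fun r => 2 * r.2.2 * (pd₂ G ∘ timeRadiusSq) r :=
    (differentiable_timeRadiusSq.continuous.continuousAt.eventually hG).mono
      fun r hr => pdY_comp_timeRadiusSq hr
  rw [pdY, hpdY.fderiv_eq,
    fderiv_fun_mul (by fun_prop) (hG₂.comp p (differentiable_timeRadiusSq p))]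
  simp (disch := fun_prop) [fderiv_comp_timeRadiusSq_apply hG₂, fderiv_const_mul, fderiv.snd]
  ring

lemma laplacian_comp_timeRadiusSq {S : Set (ℝ × ℝ)} (hS : IsOpen S) (hG : ContDiffOn ℝ 2 G S)
    (hp : timeRadiusSq p ∈ S) :
    pdX (pdX (G ∘ timeRadiusSq)) p + pdY (pdY (G ∘ timeRadiusSq)) p
      = radialLaplacian G (timeRadiusSq p) := by
  have hdiff : ∀ᶠ q in 𝓝 (timeRadiusSq p), DifferentiableAt ℝ G q :=
    eventually_of_mem (hS.mem_nhds hp) fun q hq =>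
      (hG.differentiableOn two_ne_zero).differentiableAt (hS.mem_nhds hq)
  have hdiff₂ := (hG.differentiableOn_pd₂ hS).differentiableAt (hS.mem_nhds hp)
  rw [pdX_pdX_comp_timeRadiusSq hdiff hdiff₂, pdY_pdY_comp_timeRadiusSq hdiff hdiff₂,
    radialLaplacian, timeRadiusSq]
  ring

end RadialLift

theorem solvesRadial_comp_timeRadiusSq {d₁ d₂ d₃ : ℝ} (F' : ℝ → ℝ) {U V W : ℝ × ℝ → ℝ}
    {S : Set (ℝ × ℝ)} {Ω : Set (ℝ × ℝ × ℝ)} (hS : IsOpen S) (hΩ : MapsTo timeRadiusSq Ω S)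
    (hU : ContDiffOn ℝ 2 U S) (hV : ContDiffOn ℝ 2 V S) (hW : ContDiffOn ℝ 2 W S)
    (hUeq : ∀ q ∈ S, pd₁ U q = d₁ * radialLaplacian U q - U q * V q)
    (hVeq : ∀ q ∈ S, pd₁ V q = d₂ * radialLaplacian V q - U q * V q)
    (hWeq : ∀ q ∈ S, pd₁ W q = d₃ * radialLaplacian W q + U q * V q) :
    SolvesRadial d₁ d₂ d₃ F' (U ∘ timeRadiusSq) (V ∘ timeRadiusSq) (W ∘ timeRadiusSq) Ω := by
  intro p hp
  have hq := hΩ hp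
  have hdiff {G : ℝ × ℝ → ℝ} (hG : ContDiffOn ℝ 2 G S) : DifferentiableAt ℝ G (timeRadiusSq p) :=
    (hG.differentiableOn two_ne_zero).differentiableAt (hS.mem_nhds hq)
  simp only [Function.comp_apply, pdT_comp_timeRadiusSq (hdiff _),
    convection_comp_timeRadiusSq_eq_zero (hdiff _), laplacian_comp_timeRadiusSq hS _ hq,
    mul_zero, add_zero, hU, hV, hW]
  exact ⟨hUeq _ hq, hVeq _ hq, hWeq _ hq⟩

section InverseProfile

variable (c : ℝ) {q : ℝ × ℝ}

lemma contDiffOn_const_div_snd : ContDiffOn ℝ 2 (fun q : ℝ × ℝ => c / q.2) {q | q.2 ≠ 0} :=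
  contDiffOn_const.div contDiffOn_snd fun _ hq => hq

lemma pd₁_const_div_snd (hq : q.2 ≠ 0) : pd₁ (fun q : ℝ × ℝ => c / q.2) q = 0 :=
  pd₁_eq_of_hasDerivAt (by fun_prop (disch := exact hq)) (hasDerivAt_const q.1 (c / q.2))

lemma radialLaplacian_const_div_snd (hq : q.2 ≠ 0) :
    radialLaplacian (fun q : ℝ × ℝ => c / q.2) q = 4 * c / q.2 ^ 2 := by
  have hg (r : ℝ × ℝ) (hr : r.2 ≠ 0) : HasDerivAt (fun s => c / (r.1, s).2) (-c / r.2 ^ 2) r.2 :=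
    ((hasDerivAt_const r.2 c).fun_div (hasDerivAt_id' r.2) hr).congr_deriv (by ring)
  have ha : HasDerivAt (fun s => -c / (q.1, s).2 ^ 2) (2 * c / q.2 ^ 3) q.2 :=
    ((hasDerivAt_const q.2 (-c)).fun_div (hasDerivAt_pow 2 q.2) (pow_ne_zero 2 hq)).congr_deriv
      (by field_simp; ring)
  rw [radialLaplacian_eq_of_hasDerivAt (isOpen_ne_fun continuous_snd continuous_const) hq
    ((contDiffOn_const_div_snd c).differentiableOn two_ne_zero) hg
    (by fun_prop (disch := simpa using hq)) ha]
  field_simp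
  ring

end InverseProfile

section HeatProfile

/-- The heat kernel `C/t · exp(-(x² + y²)/(4dt))` of `∂ₜ = d (∂ₓ² + ∂ᵧ²)`, written as a function
of `(t, x² + y²)`. -/
noncomputable def heatProfile (C d : ℝ) (q : ℝ × ℝ) : ℝ := C / q.1 * exp (-q.2 / (4 * d * q.1))

lemma hasDerivAt_mul_exp_neg_div (A k s : ℝ) :
    HasDerivAt (fun s => A * exp (-s / k)) (-A / k * exp (-s / k)) s :=
  (((hasDerivAt_neg' s).div_const k).exp.const_mul A).congr_deriv (by ring)

variable (C : ℝ) {d : ℝ} {q : ℝ × ℝ}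

lemma contDiffOn_heatProfile (hd : d ≠ 0) : ContDiffOn ℝ 2 (heatProfile C d) {q | q.1 ≠ 0} := by
  intro q hq
  have : 4 * d * q.1 ≠ 0 := by simp_all
  exact ContDiffAt.contDiffWithinAt (by unfold heatProfile; fun_prop (disch := assumption))

lemma pd₁_heatProfile (hd : d ≠ 0) (hq : q.1 ≠ 0) :
    pd₁ (heatProfile C d) q = d * radialLaplacian (heatProfile C d) q := by
  have hS : IsOpen {q : ℝ × ℝ | q.1 ≠ 0} := isOpen_ne_fun continuous_fst continuous_const
  have hk : 4 * d * q.1 ≠ 0 := by simp_all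
  have ht : HasDerivAt (fun s => heatProfile C d (s, q.2))
      ((C * q.2 / (4 * d * q.1 ^ 3) - C / q.1 ^ 2) * exp (-q.2 / (4 * d * q.1))) q.1 :=
    (((hasDerivAt_const q.1 C).fun_div (hasDerivAt_id' q.1) hq).mul
      ((hasDerivAt_const q.1 (-q.2)).fun_div ((hasDerivAt_id' q.1).const_mul (4 * d)) hk).exp
      ).congr_deriv (by field_simp; ring)
  have hρ (r : ℝ × ℝ) (_ : r ∈ {q : ℝ × ℝ | q.1 ≠ 0}) :
      HasDerivAt (fun s => heatProfile C d (r.1, s))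
        (-(C / r.1) / (4 * d * r.1) * exp (-r.2 / (4 * d * r.1))) r.2 :=
    hasDerivAt_mul_exp_neg_div (C / r.1) (4 * d * r.1) r.2
  have hK := (contDiffOn_heatProfile C hd).differentiableOn two_ne_zero
  rw [pd₁_eq_of_hasDerivAt (hK.differentiableAt (hS.mem_nhds hq)) ht,
    radialLaplacian_eq_of_hasDerivAt hS hq hK hρ (by fun_prop (disch := assumption))
      (hasDerivAt_mul_exp_neg_div (-(C / q.1) / (4 * d * q.1)) (4 * d * q.1) q.2)]
  field_simp
  ring

end HeatProfile

lemma isOpen_fst_ne_zero_and_snd_ne_zero : IsOpen {q : ℝ × ℝ | q.1 ≠ 0 ∧ q.2 ≠ 0} :=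
  (isOpen_ne_fun continuous_fst continuous_const).inter
    (isOpen_ne_fun continuous_snd continuous_const)

lemma pd₁_heatProfile_sub_const_div_snd (C c : ℝ) {d : ℝ} (hd : d ≠ 0) {q : ℝ × ℝ}
    (hq₁ : q.1 ≠ 0) (hq₂ : q.2 ≠ 0) :
    pd₁ (fun r => heatProfile C d r - c / r.2) q
      = d * radialLaplacian (fun r => heatProfile C d r - c / r.2) q + 4 * d * c / q.2 ^ 2 := by
  have hS := isOpen_fst_ne_zero_and_snd_ne_zero
  have hheat := (contDiffOn_heatProfile C hd).mono fun r (hr : r.1 ≠ 0 ∧ r.2 ≠ 0) => hr.1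
  have hinv := (contDiffOn_const_div_snd c).mono fun r (hr : r.1 ≠ 0 ∧ r.2 ≠ 0) => hr.2
  have hq : q.1 ≠ 0 ∧ q.2 ≠ 0 := ⟨hq₁, hq₂⟩
  rw [pd₁_sub ((hheat.contDiffAt (hS.mem_nhds hq)).differentiableAt two_ne_zero)
      ((hinv.contDiffAt (hS.mem_nhds hq)).differentiableAt two_ne_zero),
    radialLaplacian_sub hS hq hheat hinv, pd₁_heatProfile C hd hq₁, pd₁_const_div_snd c hq₂,
    radialLaplacian_const_div_snd c hq₂]
  ring

lemma sq_add_sq_ne_zero_of_ne_zero {v : ℝ × ℝ} (hv : v ≠ 0) : v.1 ^ 2 + v.2 ^ 2 ≠ 0 := by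
  contrapose! hv
  obtain ⟨h₁, h₂⟩ := (add_eq_zero_iff_of_nonneg (sq_nonneg _) (sq_nonneg _)).1 hv
  exact Prod.ext (pow_eq_zero_iff two_ne_zero |>.1 h₁) (pow_eq_zero_iff two_ne_zero |>.1 h₂)

theorem nonstationary_solution_alpha_zero_general
    (d₁ d₂ d₃ C₂ : ℝ) (hd₃ : d₃ ≠ 0) (F : ℝ → ℝ) :
    SolvesRadial d₁ d₂ d₃ (deriv F)
      (fun p => 4 * d₂ / (p.2.1 ^ 2 + p.2.2 ^ 2))
      (fun p => 4 * d₁ / (p.2.1 ^ 2 + p.2.2 ^ 2))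
      (fun p => (C₂ / p.1) * Real.exp (-(p.2.1 ^ 2 + p.2.2 ^ 2) / (4 * d₃ * p.1))
        - 4 * d₁ * d₂ / (d₃ * (p.2.1 ^ 2 + p.2.2 ^ 2)))
      {p : ℝ × ℝ × ℝ | 0 < p.1 ∧ p.2 ≠ 0} := by
  set S : Set (ℝ × ℝ) := {q | q.1 ≠ 0 ∧ q.2 ≠ 0}
  have hΩ : MapsTo timeRadiusSq {p : ℝ × ℝ × ℝ | 0 < p.1 ∧ p.2 ≠ 0} S :=
    fun p hp => ⟨hp.1.ne', sq_add_sq_ne_zero_of_ne_zero hp.2⟩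
  have hinv (c : ℝ) : ContDiffOn ℝ 2 (fun q : ℝ × ℝ => c / q.2) S :=
    (contDiffOn_const_div_snd c).mono fun _ hq => hq.2
  have hheat : ContDiffOn ℝ 2 (heatProfile C₂ d₃) S :=
    (contDiffOn_heatProfile C₂ hd₃).mono fun _ hq => hq.1
  -- write the stationary part of `w` as `c / ρ`, so that `w` matches `W ∘ timeRadiusSq` below
  simp only [div_mul_eq_div_div (4 * d₁ * d₂) d₃]
  refine solvesRadial_comp_timeRadiusSq (deriv F) isOpen_fst_ne_zero_and_snd_ne_zero hΩ
    (hinv _) (hinv _) (hheat.sub (hinv _)) ?_ ?_ ?_ <;> intro q ⟨hq₁, hq₂⟩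
  · rw [pd₁_const_div_snd _ hq₂, radialLaplacian_const_div_snd _ hq₂]
    field_simp
    ring
  · rw [pd₁_const_div_snd _ hq₂, radialLaplacian_const_div_snd _ hq₂]
    field_simp
    ring
  · rw [pd₁_heatProfile_sub_const_div_snd C₂ _ hd₃ hq₁ hq₂]
    field_simp

/-- Nonstationary exact solution with `α = 0`: the functions `u = 4d₂/(x²+y²)`,
`v = 4d₁/(x²+y²)`, `w = (C₂/t)·exp(−(x²+y²)/(4d₃t)) − 4d₁d₂/(d₃(x²+y²))`
solve the system with stream function `Ψ = F(x²+y²)` for `t > 0`, `(x,y) ≠ (0,0)`. -/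
theorem nonstationary_solution_alpha_zero
    (d₁ d₂ d₃ C₂ : ℝ) (hd₃ : d₃ ≠ 0) (F : ℝ → ℝ) (hF : Differentiable ℝ F) :
    SolvesRadial d₁ d₂ d₃ (deriv F)
      (fun p => 4 * d₂ / (p.2.1 ^ 2 + p.2.2 ^ 2))
      (fun p => 4 * d₁ / (p.2.1 ^ 2 + p.2.2 ^ 2))
      (fun p => (C₂ / p.1) * Real.exp (-(p.2.1 ^ 2 + p.2.2 ^ 2) / (4 * d₃ * p.1))
        - 4 * d₁ * d₂ / (d₃ * (p.2.1 ^ 2 + p.2.2 ^ 2)))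
      {p : ℝ × ℝ × ℝ | 0 < p.1 ∧ p.2 ≠ 0} :=
  nonstationary_solution_alpha_zero_general d₁ d₂ d₃ C₂ hd₃ F
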